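/- arXiv:1510.03742 — 2 statements merged into one kernel-verified Lean document; each statement's English description precedes it below -/
import Mathlib

section
/- Interset complementation: let E be an edge set on Fin n and let S₁, S₂ be disjoint subsets of Fin n. Work on n + 2 qubits with ancilla qubits a and b, and consider the operator W = (∏_{v ∈ S₁} CZ_{a,v}) (∏_{u ∈ S₂} CZ_{b,u}) ∘ FX_{a,b} ∘ (∏_{v ∈ S₁} CZ_{a,v}) (∏_{u ∈ S₂} CZ_{b,u}). Then W (|G_E⟩ ⊗ |+⟩_a ⊗ |+⟩_b) = |G_{E'}⟩ ⊗ |+⟩_a ⊗ |+⟩_b, where E' is the symmetric difference of E with {s(v,u) : v ∈ S₁, u ∈ S₂}; i.e., all edges between S₁ and S₂ are complemented, the ancillas are returned to |+⟩ unentangled, and the circuit uses O(|S₁| + |S₂|) two-qubit gates. -/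
open Finset

/-- An `n`-qubit state: a vector of amplitudes indexed by bit strings `S : Fin n → Bool`. -/
abbrev QState (n : ℕ) := (Fin n → Bool) → ℂ

open scoped Classical in
/-- `edgeCount E S` is the number of edges of `E` all of whose endpoints `v` satisfy
`S v = true` (a self-loop `s(v,v)` counts when `S v = true`). -/
noncomputable def edgeCount {n : ℕ} (E : Finset (Sym2 (Fin n))) (S : Fin n → Bool) : ℕ :=
  (E.filter fun e => ∀ v ∈ e, S v = true).card

/-- The graph state `|G_E⟩` of the (multi)graph on `Fin n` with edge set `E`:
its amplitude at `S` is `(-1) ^ (edgeCount E S) * 2 ^ (-n/2)`. -/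
noncomputable def graphState {n : ℕ} (E : Finset (Sym2 (Fin n))) : QState n :=
  fun S => (-1 : ℂ) ^ edgeCount E S * (((Real.sqrt 2)⁻¹ ^ n : ℝ) : ℂ)

/-- Pauli `Z` on qubit `a`:  `(Z_a ψ) S = (-1) ^ (S a) * ψ S`. -/
noncomputable def Zgate {n : ℕ} (a : Fin n) : QState n → QState n :=
  fun ψ S => (if S a then -1 else 1) * ψ S

/-- Pauli `X` on qubit `a`:  `(X_a ψ) S = ψ S'` where `S'` is `S` with bit `a` flipped. -/
noncomputable def Xgate {n : ℕ} (a : Fin n) : QState n → QState n :=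
  fun ψ S => ψ (Function.update S a (!S a))

/-- Controlled-`Z` on qubits `a`, `b`:  `(CZ_{a,b} ψ) S = (-1) ^ (S a * S b) * ψ S`. -/
noncomputable def CZgate {n : ℕ} (a b : Fin n) : QState n → QState n :=
  fun ψ S => (if S a && S b then -1 else 1) * ψ S

/-- Hadamard gate on qubit `a`. -/
noncomputable def Hgate {n : ℕ} (a : Fin n) : QState n → QState n :=
  fun ψ S => ((Real.sqrt 2 : ℝ) : ℂ)⁻¹ *
    ∑ t : Bool, (if S a && t then -1 else 1) * ψ (Function.update S a t)

/-- The neighbourhood `N(v)` of `v` in the graph with edge set `E`. -/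
noncomputable def nbhd {n : ℕ} (E : Finset (Sym2 (Fin n))) (v : Fin n) : Finset (Fin n) :=
  Finset.univ.filter fun u => s(u, v) ∈ E

/-- The inner product `⟨φ, ψ⟩ = ∑ S, conj (φ S) * ψ S`. -/
noncomputable def qInner {n : ℕ} (φ ψ : QState n) : ℂ :=
  ∑ S : Fin n → Bool, (starRingEnd ℂ) (φ S) * ψ S

/-- The gate `FX_{a,b} = (H_a H_b) ∘ CZ_{a,b} ∘ (H_a H_b)`. -/
noncomputable def FXgate {n : ℕ} (a b : Fin n) : QState n → QState n :=
  fun ψ => Hgate a (Hgate b (CZgate a b (Hgate a (Hgate b ψ))))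

/-- Any two `CZ` gates commute (as elements of `Function.End (QState n)`). -/
lemma CZgate_commute {n : ℕ} (a b c d : Fin n) :
    @Commute (Function.End (QState n)) _ (CZgate a b) (CZgate c d) := by
  unfold Commute SemiconjBy
  funext ψ S
  show CZgate a b (CZgate c d ψ) S = CZgate c d (CZgate a b ψ) S
  simp only [CZgate]
  ring

/-- The product `∏_{v ∈ A} CZ_{a,v}` of controlled-`Z` gates from qubit `a` to every
qubit in `A`. -/
noncomputable def CZprod {n : ℕ} (a : Fin n) (A : Finset (Fin n)) :
    Function.End (QState n) :=
  A.noncommProd (fun v => (CZgate a v : Function.End (QState n)))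
    (by intro u _ w _ _; exact CZgate_commute a u a w)

/-! The two `CZ` layers `L = (∏ CZ_{a,v})(∏ CZ_{b,u})` are diagonal: at a basis state `S` with
ancilla bits `x, y` they multiply by `σ(x, y) = (-1)^(x k₁ + y k₂)`, where `k₁, k₂` count the
vertices of `S₁`, `S₂` that are set in `S`. The input does not depend on the ancilla bits and
`FX_{a,b}` only mixes those, so `L ∘ FX ∘ L` acts at `S` as the scalar
`½ σ(x,y) (σ(x,y) + σ(¬x,y) + σ(x,¬y) - σ(¬x,¬y)) = (-1)^(k₁ k₂)`. For disjoint `S₁`, `S₂` this is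
the parity of the number of `S₁`–`S₂` edges inside `S`, and multiplying a graph state by it
toggles exactly those edges. -/

open Function
open scoped symmDiff

namespace Finset

variable {α : Type*} [DecidableEq α]

theorem filter_symmDiff (p : α → Prop) [DecidablePred p] (s t : Finset α) :
    (s ∆ t).filter p = s.filter p ∆ t.filter p := by
  ext x
  simp only [mem_filter, mem_symmDiff]
  tauto

theorem card_symmDiff_add_two_mul_card_inter (s t : Finset α) :
    #(s ∆ t) + 2 * #(s ∩ t) = #s + #t := by
  rw [symmDiff_def, sup_eq_union, card_union_of_disjoint disjoint_sdiff_sdiff]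
  have := card_sdiff_add_card_inter s t
  have := card_sdiff_add_card_inter t s
  rw [inter_comm t s] at this
  omega

theorem neg_one_pow_card_symmDiff {R : Type*} [Monoid R] [HasDistribNeg R] (s t : Finset α) :
    (-1 : R) ^ #(s ∆ t) = (-1) ^ #s * (-1) ^ #t := by
  rw [← pow_add, ← card_symmDiff_add_two_mul_card_inter, pow_add, pow_mul, neg_one_sq, one_pow,
    mul_one]

end Finset

theorem neg_one_pow_edgeCount_symmDiff {n : ℕ} (E F : Finset (Sym2 (Fin n))) (S : Fin n → Bool) :
    (-1 : ℂ) ^ edgeCount (E ∆ F) S = (-1) ^ edgeCount E S * (-1) ^ edgeCount F S := by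
  simp only [edgeCount, Finset.filter_symmDiff, Finset.neg_one_pow_card_symmDiff]

theorem edgeCount_image_product {n : ℕ} {S₁ S₂ : Finset (Fin n)} (hdisj : Disjoint S₁ S₂)
    (T : Fin n → Bool) :
    edgeCount ((S₁ ×ˢ S₂).image fun p => s(p.1, p.2)) T = #{v ∈ S₁ | T v} * #{v ∈ S₂ | T v} := by
  have hprod : {p ∈ S₁ ×ˢ S₂ | ∀ v ∈ s(p.1, p.2), T v = true} =
      {v ∈ S₁ | T v} ×ˢ {v ∈ S₂ | T v} := by
    ext p
    simp only [mem_filter, mem_product, Sym2.ball]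
    tauto
  rw [edgeCount, filter_image, hprod, card_image_of_injOn, card_product]
  rintro ⟨v₁, v₂⟩ hv ⟨u₁, u₂⟩ hu h
  simp only [coe_product, Set.mem_prod, mem_coe, mem_filter] at hv hu
  rcases Sym2.eq_iff.mp h with ⟨rfl, rfl⟩ | ⟨rfl, rfl⟩
  · rfl
  · exact absurd hu.2.1 (disjoint_left.mp hdisj hv.1.1)

theorem neg_one_pow_FXgate_phase_sum (x y : Bool) (k₁ k₂ : ℕ) :
    (-1 : ℂ) ^ (x.toNat * k₁ + y.toNat * k₂) *
        ((-1) ^ (x.toNat * k₁ + y.toNat * k₂) + (-1) ^ ((!x).toNat * k₁ + y.toNat * k₂) +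
          (-1) ^ (x.toNat * k₁ + (!y).toNat * k₂) - (-1) ^ ((!x).toNat * k₁ + (!y).toNat * k₂)) =
      2 * (-1) ^ (k₁ * k₂) := by
  rw [pow_mul]
  rcases neg_one_pow_eq_or ℂ k₁ with h₁ | h₁ <;> rcases neg_one_pow_eq_or ℂ k₂ with h₂ | h₂ <;>
    cases x <;> cases y <;> simp [pow_add, h₁, h₂] <;> norm_num

theorem sqrt_two_inv_pow_four : ((Real.sqrt 2 : ℝ) : ℂ)⁻¹ ^ 4 = 4⁻¹ := by
  rw [← Complex.ofReal_inv, ← Complex.ofReal_pow, inv_pow, show 4 = 2 * 2 by rfl, pow_mul,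
    Real.sq_sqrt zero_le_two]
  push_cast
  norm_num

theorem FXgate_apply {m : ℕ} {a b : Fin m} (hab : a ≠ b) (ψ : QState m) (S : Fin m → Bool) :
    FXgate a b ψ S = 2⁻¹ * (ψ S + ψ (update S a (!S a)) + ψ (update S b (!S b))
      - ψ (update (update S a (!S a)) b (!S b))) := by
  simp only [FXgate, Hgate, CZgate, Fintype.sum_bool, update_self, update_of_ne hab,
    update_of_ne hab.symm, update_idem, update_comm hab.symm]
  have hSa := update_eq_self a S
  have hSb := update_eq_self b S
  cases ha : S a <;> cases hb : S b <;> rw [ha] at hSa <;> rw [hb] at hSb <;>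
    simp [hSa, hSb, update_comm hab] <;> ring_nf <;> rw [sqrt_two_inv_pow_four] <;> ring

theorem CZprod_insert_apply {m : ℕ} (a : Fin m) {u : Fin m} {A : Finset (Fin m)} (hu : u ∉ A)
    (ψ : QState m) : CZprod a (insert u A) ψ = CZgate a u (CZprod a A ψ) := by
  unfold CZprod
  erw [noncommProd_insert_of_notMem _ _ _ _ hu]
  rfl

theorem CZprod_apply {m : ℕ} (a : Fin m) (A : Finset (Fin m)) (ψ : QState m) (S : Fin m → Bool) :
    CZprod a A ψ S = (-1) ^ ((S a).toNat * #{v ∈ A | S v}) * ψ S := by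
  induction A using Finset.induction_on with
  | empty => simp only [filter_empty, card_empty, mul_zero, pow_zero, one_mul]; rfl
  | @insert u A hu ih =>
    rw [CZprod_insert_apply a hu, CZgate, ih, filter_insert]
    cases S a <;> cases S u <;> simp [hu, pow_succ]

theorem CZprod_mul_CZprod_apply {m : ℕ} (a b : Fin m) (A B : Finset (Fin m)) (ψ : QState m)
    (S : Fin m → Bool) :
    (CZprod a A * CZprod b B) ψ S =
      (-1) ^ ((S a).toNat * #{v ∈ A | S v} + (S b).toNat * #{v ∈ B | S v}) * ψ S := by
  change CZprod a A (CZprod b B ψ) S = _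
  rw [CZprod_apply, CZprod_apply, pow_add, mul_assoc]

theorem filter_update_of_notMem {m : ℕ} {A : Finset (Fin m)} {a : Fin m} (ha : a ∉ A)
    (S : Fin m → Bool) (t : Bool) : {v ∈ A | update S a t v} = {v ∈ A | S v} :=
  filter_congr fun v hv => by rw [update_of_ne (ne_of_mem_of_not_mem hv ha)]

theorem FXgate_conj_CZprod_mul_CZprod_apply {m : ℕ} {a b : Fin m} (hab : a ≠ b) {A B : Finset (Fin m)}
    (haA : a ∉ A) (hbA : b ∉ A) (haB : a ∉ B) (hbB : b ∉ B) {ψ : QState m}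
    (hψa : ∀ S t, ψ (update S a t) = ψ S) (hψb : ∀ S t, ψ (update S b t) = ψ S)
    (S : Fin m → Bool) :
    (CZprod a A * CZprod b B) (FXgate a b ((CZprod a A * CZprod b B) ψ)) S =
      (-1) ^ (#{v ∈ A | S v} * #{v ∈ B | S v}) * ψ S := by
  simp only [CZprod_mul_CZprod_apply, FXgate_apply hab, filter_update_of_notMem, haA, hbA, haB,
    hbB, hψa, hψb, update_self, update_of_ne hab, update_of_ne hab.symm, not_false_eq_true]
  have key := neg_one_pow_FXgate_phase_sum (S a) (S b) #{v ∈ A | S v} #{v ∈ B | S v}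
  linear_combination (2⁻¹ * ψ S) * key

theorem castAdd_ne {n k : ℕ} (v : Fin n) {j : Fin (n + k)} (hj : n ≤ j) : Fin.castAdd k v ≠ j :=
  Fin.ne_of_val_ne (by simp; omega)

theorem notMem_image_castAdd {n k : ℕ} (A : Finset (Fin n)) {j : Fin (n + k)} (hj : n ≤ j) :
    j ∉ A.image (Fin.castAdd k) := by
  simpa using fun v _ => castAdd_ne v hj

theorem update_comp_castAdd {n k : ℕ} (S : Fin (n + k) → Bool) {j : Fin (n + k)} (hj : n ≤ j)
    (t : Bool) : (fun v => update S j t (Fin.castAdd k v)) = fun v => S (Fin.castAdd k v) :=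
  funext fun v => update_of_ne (castAdd_ne v hj) _ _

theorem card_filter_image_castAdd {n k : ℕ} (A : Finset (Fin n)) (S : Fin (n + k) → Bool) :
    #{v ∈ A.image (Fin.castAdd k) | S v} = #{v ∈ A | S (Fin.castAdd k v)} := by
  rw [filter_image, card_image_of_injective _ (Fin.castAdd_injective n k)]

/-- Interset complementation: with two ancilla qubits `a`, `b` prepared in `|+⟩`, the
circuit `(∏_{v ∈ S₁} CZ_{a,v})(∏_{u ∈ S₂} CZ_{b,u}) ∘ FX_{a,b} ∘
(∏_{v ∈ S₁} CZ_{a,v})(∏_{u ∈ S₂} CZ_{b,u})` complements all edges between the disjoint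
sets `S₁` and `S₂` and returns the ancillas to `|+⟩`, unentangled. -/
theorem stmt13 {n : ℕ} (E : Finset (Sym2 (Fin n))) (S₁ S₂ : Finset (Fin n))
    (hdisj : Disjoint S₁ S₂) :
    (fun ψ : QState (n + 2) =>
        (CZprod (⟨n, by omega⟩ : Fin (n + 2)) (S₁.image (Fin.castAdd 2)) *
            CZprod (⟨n + 1, by omega⟩ : Fin (n + 2)) (S₂.image (Fin.castAdd 2)))
          (FXgate (⟨n, by omega⟩ : Fin (n + 2)) (⟨n + 1, by omega⟩ : Fin (n + 2))
            ((CZprod (⟨n, by omega⟩ : Fin (n + 2)) (S₁.image (Fin.castAdd 2)) *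
                CZprod (⟨n + 1, by omega⟩ : Fin (n + 2)) (S₂.image (Fin.castAdd 2))) ψ)))
      (fun S => graphState E (fun v => S (Fin.castAdd 2 v)) *
        ((Real.sqrt 2 : ℝ) : ℂ)⁻¹ * ((Real.sqrt 2 : ℝ) : ℂ)⁻¹) =
    fun S =>
      graphState (symmDiff E ((S₁ ×ˢ S₂).image fun p => s(p.1, p.2)))
          (fun v => S (Fin.castAdd 2 v)) *
        ((Real.sqrt 2 : ℝ) : ℂ)⁻¹ * ((Real.sqrt 2 : ℝ) : ℂ)⁻¹ := by
  have ha : n ≤ (⟨n, by omega⟩ : Fin (n + 2)) := le_rfl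
  have hb : n ≤ (⟨n + 1, by omega⟩ : Fin (n + 2)) := Nat.le_succ n
  have hab : (⟨n, by omega⟩ : Fin (n + 2)) ≠ ⟨n + 1, by omega⟩ := by simp [Fin.ext_iff]
  funext S
  beta_reduce
  rw [FXgate_conj_CZprod_mul_CZprod_apply hab
    (notMem_image_castAdd _ ha) (notMem_image_castAdd _ hb) (notMem_image_castAdd _ ha)
    (notMem_image_castAdd _ hb) (fun S t => by simp only [update_comp_castAdd S ha])
    (fun S t => by simp only [update_comp_castAdd S hb]), card_filter_image_castAdd,
    card_filter_image_castAdd, graphState, graphState, neg_one_pow_edgeCount_symmDiff,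
    edgeCount_image_product hdisj]
  ring
end

section
/- Vertex comparison for adjacent vertices: let E be an edge set on Fin n and a ≠ b vertices with s(a,b) ∈ E. If the transposition swapping a and b is an automorphism of the graph (the image of E under swapping a and b equals E), then Y_a Y_b |G_E⟩ = |G_E⟩, where Y_v = i · X_v · Z_v. -/
/-!
Let `S'` be `S` with the bits at `a` and `b` flipped and `σ` the transposition `(a b)`, an
automorphism of `E`. The sign `edgeSign S' e * edgeSign S e` by which the contribution of an edge
`e` to the amplitude changes is `σ`-invariant, so in the product of these signs over `E` the
two-element `σ`-orbits of `E` cancel. The `σ`-fixed edges other than `ab` avoid `a` and `b` and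
keep their sign, while `ab` changes sign exactly when `S a = S b`. This is the phase
`-(-1)^(S_a+S_b)` that `Y_a Y_b` undoes.
-/

open Finset

/-- Pauli `Y` on qubit `a`:  `Y_a = i · X_a · Z_a`. -/
noncomputable def Ygate {n : ℕ} (a : Fin n) : QState n → QState n :=
  fun ψ S => Complex.I * Xgate a (Zgate a ψ) S

theorem Finset.prod_eq_prod_filter_fixed {α M : Type*} [CommMonoid M] [DecidableEq α]
    (s : Finset α) {σ : α → α} (hσ : ∀ x ∈ s, σ x ∈ s) (hσσ : ∀ x ∈ s, σ (σ x) = x)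
    {f : α → M} (hf : ∀ x ∈ s, f (σ x) = f x) (hff : ∀ x ∈ s, f x * f x = 1) :
    ∏ x ∈ s, f x = ∏ x ∈ s with σ x = x, f x := by
  suffices ∏ x ∈ s with ¬σ x = x, f x = 1 by
    rw [← prod_filter_mul_prod_filter_not s (fun x => σ x = x), this, mul_one]
  refine prod_involution (fun x _ => σ x) (fun x hx => ?_) (fun x hx _ => (mem_filter.1 hx).2)
    (fun x hx => ?_) (fun x hx => hσσ x (mem_filter.1 hx).1)
  · rw [hf x (mem_filter.1 hx).1, hff x (mem_filter.1 hx).1]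
  · obtain ⟨hxs, hx⟩ := mem_filter.1 hx
    exact mem_filter.2 ⟨hσ x hxs, fun h => hx (by rw [← h, hσσ x hxs])⟩

theorem Sym2.eq_of_map_swap_eq_self {V : Type*} [DecidableEq V] {a b : V} (hab : a ≠ b)
    {e : Sym2 V} (he : e.map (Equiv.swap a b) = e) (ha : a ∈ e) : e = s(a, b) := by
  obtain ⟨c, rfl⟩ := Sym2.mem_iff_exists.1 ha
  rw [Sym2.map_mk, Equiv.swap_apply_left, Sym2.eq_iff] at he
  rcases he with ⟨h, -⟩ | ⟨rfl, -⟩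
  · exact absurd h.symm hab
  · rfl

theorem Sym2.notMem_of_map_swap_eq_self {V : Type*} [DecidableEq V] {a b : V} (hab : a ≠ b)
    {e : Sym2 V} (he : e.map (Equiv.swap a b) = e) (hne : e ≠ s(a, b)) : a ∉ e ∧ b ∉ e := by
  refine ⟨fun ha => hne (eq_of_map_swap_eq_self hab he ha), fun hb => hne ?_⟩
  rw [Equiv.swap_comm] at he
  exact (eq_of_map_swap_eq_self hab.symm he hb).trans Sym2.eq_swap

section EdgeSign

variable {V : Type*}

open scoped Classical in
noncomputable def edgeSign (S : V → Bool) (e : Sym2 V) : ℂ :=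
  if ∀ v ∈ e, S v = true then -1 else 1

theorem edgeSign_mk (S : V → Bool) (x y : V) :
    edgeSign S s(x, y) = if S x = true ∧ S y = true then -1 else 1 := by
  simp only [edgeSign, Sym2.mem_iff, forall_eq_or_imp, forall_eq]

theorem edgeSign_mul_self (S : V → Bool) (e : Sym2 V) : edgeSign S e * edgeSign S e = 1 := by
  unfold edgeSign; split_ifs <;> norm_num

theorem edgeSign_congr {S T : V → Bool} {e : Sym2 V} (h : ∀ v ∈ e, S v = T v) :
    edgeSign S e = edgeSign T e := by
  unfold edgeSign; congr 1; exact propext (forall₂_congr fun v hv => by rw [h v hv])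

end EdgeSign

theorem neg_one_pow_edgeCount {n : ℕ} (E : Finset (Sym2 (Fin n))) (S : Fin n → Bool) :
    (-1 : ℂ) ^ edgeCount E S = ∏ e ∈ E, edgeSign S e := by
  classical
  rw [edgeCount, ← prod_const, prod_filter]
  exact prod_congr rfl fun e _ => by rw [edgeSign]; congr

section FlipPair

variable {V : Type*} [DecidableEq V] {a b : V}

theorem edgeSign_flip_mul_map_swap (hab : a ≠ b) (S : V → Bool) (e : Sym2 V) :
    edgeSign (Function.update (Function.update S a (!S a)) b (!S b)) (e.map (Equiv.swap a b)) *
        edgeSign S (e.map (Equiv.swap a b)) =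
      edgeSign (Function.update (Function.update S a (!S a)) b (!S b)) e * edgeSign S e := by
  induction e using Sym2.ind with
  | _ x y =>
    simp only [Sym2.map_mk, edgeSign_mk, Equiv.swap_apply_def, Function.update_apply]
    by_cases hxa : x = a <;> by_cases hxb : x = b <;> by_cases hya : y = a <;>
      by_cases hyb : y = b <;> simp_all <;> cases S a <;> cases S b <;> simp

theorem edgeSign_flip_mul_of_map_swap_eq_self (hab : a ≠ b) (S : V → Bool) {e : Sym2 V}
    (he : e.map (Equiv.swap a b) = e) :
    edgeSign (Function.update (Function.update S a (!S a)) b (!S b)) e * edgeSign S e =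
      if e = s(a, b) then (if S a = S b then -1 else 1) else 1 := by
  by_cases hne : e = s(a, b)
  · subst hne
    rw [if_pos rfl, edgeSign_mk, edgeSign_mk, Function.update_self, Function.update_of_ne hab,
      Function.update_self]
    cases S a <;> cases S b <;> simp
  · rw [if_neg hne, edgeSign_congr fun v hv => ?_, edgeSign_mul_self]
    obtain ⟨ha, hb⟩ := Sym2.notMem_of_map_swap_eq_self hab he hne
    rw [Function.update_of_ne (by rintro rfl; exact hb hv),
      Function.update_of_ne (by rintro rfl; exact ha hv)]

theorem prod_edgeSign_flip (hab : a ≠ b) {E : Finset (Sym2 V)} (hadj : s(a, b) ∈ E)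
    (haut : E.image (Sym2.map (Equiv.swap a b)) = E) (S : V → Bool) :
    ∏ e ∈ E, edgeSign (Function.update (Function.update S a (!S a)) b (!S b)) e =
      (if S a = S b then -1 else 1) * ∏ e ∈ E, edgeSign S e := by
  set S' := Function.update (Function.update S a (!S a)) b (!S b)
  have hmem : ∀ e ∈ E, e.map (Equiv.swap a b) ∈ E := fun e he => haut ▸ mem_image_of_mem _ he
  have hinv : ∀ e : Sym2 V, (e.map (Equiv.swap a b)).map (Equiv.swap a b) = e := by
    simp [Sym2.map_map]
  have hfix : s(a, b).map (Equiv.swap a b) = s(a, b) := by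
    rw [Sym2.map_mk, Equiv.swap_apply_left, Equiv.swap_apply_right, Sym2.eq_swap]
  have hratio : ∏ e ∈ E, edgeSign S' e * edgeSign S e = if S a = S b then -1 else 1 := by
    rw [prod_eq_prod_filter_fixed E hmem (fun e _ => hinv e)
        (fun e _ => edgeSign_flip_mul_map_swap hab S e)
        (fun e _ => by rw [mul_mul_mul_comm, edgeSign_mul_self, edgeSign_mul_self, one_mul]),
      prod_congr rfl fun e he => edgeSign_flip_mul_of_map_swap_eq_self hab S (mem_filter.1 he).2,
      prod_ite_eq']
    exact if_pos
      (mem_filter.2 ⟨hadj, hfix⟩ : s(a, b) ∈ E.filter fun e => e.map (Equiv.swap a b) = e)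
  calc ∏ e ∈ E, edgeSign S' e
      = (∏ e ∈ E, edgeSign S' e) * ∏ e ∈ E, edgeSign S e * edgeSign S e := by
        rw [prod_eq_one fun e _ => edgeSign_mul_self S e, mul_one]
    _ = (∏ e ∈ E, edgeSign S' e * edgeSign S e) * ∏ e ∈ E, edgeSign S e := by
        rw [prod_mul_distrib, prod_mul_distrib, mul_assoc]
    _ = (if S a = S b then -1 else 1) * ∏ e ∈ E, edgeSign S e := by rw [hratio]

end FlipPair

theorem Ygate_apply {n : ℕ} (a : Fin n) (ψ : QState n) (S : Fin n → Bool) :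
    Ygate a ψ S = Complex.I * (if S a then 1 else -1) * ψ (Function.update S a (!S a)) := by
  cases h : S a <;> simp [Ygate, Xgate, Zgate, h]

theorem graphState_flip {n : ℕ} {E : Finset (Sym2 (Fin n))} {a b : Fin n} (hab : a ≠ b)
    (hadj : s(a, b) ∈ E) (haut : E.image (Sym2.map (Equiv.swap a b)) = E) (S : Fin n → Bool) :
    graphState E (Function.update (Function.update S a (!S a)) b (!S b)) =
      (if S a = S b then -1 else 1) * graphState E S := by
  simp only [graphState, neg_one_pow_edgeCount, prod_edgeSign_flip hab hadj haut S, mul_assoc]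

/-- Vertex comparison for adjacent vertices: if swapping `a` and `b` is an automorphism
of the graph and `s(a,b) ∈ E`, then `Y_a Y_b` stabilises the graph state. -/
theorem stmt17 {n : ℕ} (E : Finset (Sym2 (Fin n))) (a b : Fin n) (hab : a ≠ b)
    (hadj : s(a, b) ∈ E) (haut : E.image (Sym2.map (Equiv.swap a b)) = E) :
    Ygate a (Ygate b (graphState E)) = graphState E := by
  funext S
  rw [Ygate_apply, Ygate_apply, Function.update_of_ne hab.symm, graphState_flip hab hadj haut]
  cases S a <;> cases S b <;> simp <;> ring_nf <;> simp [Complex.I_sq]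
end
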